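/- arXiv:2310.17827 — 9 statements merged into one kernel-verified Lean document; each statement's English description precedes it below -/
import Mathlib

section
/- For all nonnegative integers s ≥ k and all nonnegative integers d, the sum over j from 0 to d of C(2j,j)·C(j,k)·C(2d-2j,d-j)·C(d-j,s-k) equals 4^(d-s)·C(2k,k)·C(2s-2k,s-k)·C(d,s). -/
/-!
Write `a_k(i) = C(2i, i) C(i, k)`. Shifted by `k`, these numbers satisfy the first-order recurrence
`(i + 1) a_k(i + 1 + k) = 2 (2 (i + k) + 1) a_k(i + k)`. The left side of the identity is the
convolution `T_t = ∑_{i + j = t} a_k(i + k) a_m(j + m)` with `s = k + m`, `d = t + s`, and the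
Leibniz rule for the derivative of a product of power series turns the two recurrences into
`(t + 1) T_{t + 1} = 4 (t + k + m + 1) T_t`, which is also the recurrence of
`4^t C(2k, k) C(2m, m) C(t + k + m, t)`.
-/

open Finset Finset.Nat Nat

section

variable {R : Type*}

theorem Finset.Nat.succ_mul_sum_antidiagonal_succ [CommSemiring R] (a b : ℕ → R) (t : ℕ) :
    (t + 1 : R) * ∑ p ∈ antidiagonal (t + 1), a p.1 * b p.2 =
      ∑ p ∈ antidiagonal t,
        (((p.1 + 1 : R) * a (p.1 + 1)) * b p.2 + a p.1 * ((p.2 + 1 : R) * b (p.2 + 1))) := by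
  have hsplit : (t + 1 : R) * ∑ p ∈ antidiagonal (t + 1), a p.1 * b p.2 =
      ∑ p ∈ antidiagonal (t + 1), ((p.1 : R) * a p.1) * b p.2 +
        ∑ p ∈ antidiagonal (t + 1), a p.1 * ((p.2 : R) * b p.2) := by
    rw [mul_sum, ← sum_add_distrib]
    refine sum_congr rfl fun p hp => ?_
    have hp' : ((p.1 + p.2 : ℕ) : R) = (t + 1 : ℕ) := congrArg _ (mem_antidiagonal.mp hp)
    push_cast at hp'
    rw [← hp']
    ring
  rw [hsplit, sum_antidiagonal_succ, sum_antidiagonal_succ', sum_add_distrib]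
  push_cast
  simp only [zero_mul, mul_zero, zero_add]

theorem Finset.Nat.sum_antidiagonal_mul_eq_zero_of_lt [Semiring R] {a b : ℕ → R} {k m n : ℕ}
    (ha : ∀ i < k, a i = 0) (hb : ∀ j < m, b j = 0) (hn : n < k + m) :
    ∑ p ∈ antidiagonal n, a p.1 * b p.2 = 0 := by
  refine sum_eq_zero fun p hp => ?_
  have hp' := mem_antidiagonal.mp hp
  rcases lt_or_ge p.1 k with h | h
  · rw [ha _ h, zero_mul]
  · rw [hb _ (by omega), mul_zero]

theorem Finset.Nat.sum_antidiagonal_add_add_mul_of_eq_zero [Semiring R]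
    {a b : ℕ → R} {k m : ℕ} (ha : ∀ i < k, a i = 0) (hb : ∀ j < m, b j = 0) (t : ℕ) :
    ∑ p ∈ antidiagonal (t + k + m), a p.1 * b p.2 =
      ∑ p ∈ antidiagonal t, a (p.1 + k) * b (p.2 + m) := by
  have hk : ∑ p ∈ antidiagonal (t + k + m), a p.1 * b p.2 =
      ∑ p ∈ antidiagonal (t + m), a (p.1 + k) * b p.2 := by
    rw [← sum_filter_of_ne (p := fun p => k ≤ p.1) fun p _ hp => ?_,
      antidiagonal_filter_le_fst_of_le (by omega), sum_map]
    · simp [show t + k + m - k = t + m by omega]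
    · by_contra h
      exact hp (by rw [ha _ (not_le.mp h), zero_mul])
  rw [hk, ← sum_filter_of_ne (p := fun p => m ≤ p.2) fun p _ hp => ?_,
    antidiagonal_filter_le_snd_of_le (by omega), sum_map]
  · simp
  · by_contra h
    exact hp (by rw [hb _ (not_le.mp h), mul_zero])

end

def centralBinomMulChoose (k i : ℕ) : ℕ := centralBinom i * i.choose k

theorem centralBinomMulChoose_eq_zero_of_lt {k i : ℕ} (h : i < k) :
    centralBinomMulChoose k i = 0 := by
  rw [centralBinomMulChoose, choose_eq_zero_of_lt h, mul_zero]

theorem centralBinomMulChoose_self (k : ℕ) : centralBinomMulChoose k k = centralBinom k := by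
  rw [centralBinomMulChoose, choose_self, mul_one]

theorem succ_mul_centralBinomMulChoose_add_succ (k i : ℕ) :
    (i + 1) * centralBinomMulChoose k (i + 1 + k) =
      2 * (2 * (i + k) + 1) * centralBinomMulChoose k (i + k) := by
  have hcentral := succ_mul_centralBinom_succ (i + k)
  have hchoose := choose_mul_succ_eq (i + k) k
  rw [show i + k + 1 - k = i + 1 by omega] at hchoose
  apply Nat.eq_of_mul_eq_mul_left (succ_pos (i + k))
  calc (i + k + 1) * ((i + 1) * centralBinomMulChoose k (i + 1 + k))
      = ((i + k + 1) * centralBinom (i + k + 1)) * ((i + k + 1).choose k * (i + 1)) := by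
        rw [centralBinomMulChoose, show i + 1 + k = i + k + 1 by omega]; ring
    _ = (i + k + 1) * (2 * (2 * (i + k) + 1) * centralBinomMulChoose k (i + k)) := by
        rw [hcentral, ← hchoose, centralBinomMulChoose]; ring

theorem sum_antidiagonal_centralBinomMulChoose (k m t : ℕ) :
    ∑ p ∈ antidiagonal t,
        centralBinomMulChoose k (p.1 + k) * centralBinomMulChoose m (p.2 + m) =
      4 ^ t * centralBinom k * centralBinom m * (t + k + m).choose t := by
  induction t with
  | zero => simp [centralBinomMulChoose_self]
  | succ t ih =>
    apply Nat.eq_of_mul_eq_mul_left (succ_pos t)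
    have hleibniz := succ_mul_sum_antidiagonal_succ
      (fun i => centralBinomMulChoose k (i + k)) (fun j => centralBinomMulChoose m (j + m)) t
    simp only [Nat.cast_id, succ_mul_centralBinomMulChoose_add_succ] at hleibniz
    have hchoose := add_one_mul_choose_eq (t + k + m) t
    rw [show t + k + m + 1 = t + 1 + k + m by omega] at hchoose
    calc (t + 1) * ∑ p ∈ antidiagonal (t + 1),
          centralBinomMulChoose k (p.1 + k) * centralBinomMulChoose m (p.2 + m)
        = ∑ p ∈ antidiagonal t, 4 * (t + k + m + 1) *
          (centralBinomMulChoose k (p.1 + k) * centralBinomMulChoose m (p.2 + m)) := by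
          rw [hleibniz]
          refine sum_congr rfl fun p hp => ?_
          rw [← mem_antidiagonal.mp hp]
          ring
      _ = (t + 1) * (4 ^ (t + 1) * centralBinom k * centralBinom m *
          (t + 1 + k + m).choose (t + 1)) := by
          rw [← mul_sum, ih]
          linear_combination (4 ^ (t + 1) * centralBinom k * centralBinom m) * hchoose

theorem stmt_0 (s k d : ℕ) (hk : k ≤ s) :
    ∑ j ∈ Finset.range (d + 1),
      (2 * j).choose j * j.choose k * (2 * (d - j)).choose (d - j) * (d - j).choose (s - k)
    = 4 ^ (d - s) * (2 * k).choose k * (2 * (s - k)).choose (s - k) * d.choose s := by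
  obtain ⟨m, rfl⟩ := Nat.exists_eq_add_of_le hk
  have hsum : ∑ j ∈ range (d + 1),
      (2 * j).choose j * j.choose k * (2 * (d - j)).choose (d - j) * (d - j).choose m =
        ∑ p ∈ antidiagonal d, centralBinomMulChoose k p.1 * centralBinomMulChoose m p.2 := by
    rw [sum_antidiagonal_eq_sum_range_succ
      (fun i j => centralBinomMulChoose k i * centralBinomMulChoose m j)]
    refine sum_congr rfl fun j _ => ?_
    simp only [centralBinomMulChoose, centralBinom_eq_two_mul_choose]
    ring
  rw [Nat.add_sub_cancel_left, hsum]
  simp only [← centralBinom_eq_two_mul_choose]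
  rcases lt_or_ge d (k + m) with hd | hd
  · rw [sum_antidiagonal_mul_eq_zero_of_lt (fun _ => centralBinomMulChoose_eq_zero_of_lt)
      (fun _ => centralBinomMulChoose_eq_zero_of_lt) hd, choose_eq_zero_of_lt hd, mul_zero]
  · obtain ⟨t, rfl⟩ : ∃ t, d = t + k + m := ⟨d - (k + m), by omega⟩
    rw [sum_antidiagonal_add_add_mul_of_eq_zero
      (fun _ => centralBinomMulChoose_eq_zero_of_lt) (fun _ => centralBinomMulChoose_eq_zero_of_lt),
      sum_antidiagonal_centralBinomMulChoose, add_assoc, Nat.add_sub_cancel, choose_symm_add]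
end

section
/- For every even nonnegative integer s, the alternating sum over k from 0 to s of (-1)^k·C(2k,k)·C(2s-2k,s-k) equals 2^s·C(s,s/2). -/
/-!
The generating function `C(x) = ∑ₖ C(2k,k) xᵏ` is the binomial series `(1 - 4x)^(-1/2)`, so
`C(x)² (1 - 4x) = 1`. Hence `C(-x) C(x)` and `C(4x²)` both square to `1 / (1 - 16x²)`; having
the same constant term `1`, they are equal, and the coefficient of `x^(2m)` gives the identity.
-/

open PowerSeries Finset Nat

theorem Ring.succ_mul_choose_succ {K : Type*} [Field K] [CharZero K] (r : K) (n : ℕ) :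
    (n + 1 : K) * Ring.choose r (n + 1) = (r - n) * Ring.choose r n := by
  have h := Ring.descPochhammer_eq_factorial_smul_choose r (n + 1)
  rw [descPochhammer_succ_right, Polynomial.smeval_mul,
    Ring.descPochhammer_eq_factorial_smul_choose] at h
  simp only [Polynomial.smeval_sub, Polynomial.smeval_X, Polynomial.smeval_natCast, pow_one,
    pow_zero, nsmul_eq_mul, Nat.factorial_succ, Nat.cast_mul] at h
  apply mul_left_cancel₀ (Nat.cast_ne_zero.mpr n.factorial_ne_zero : (n ! : K) ≠ 0)
  push_cast at h
  linear_combination -h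

theorem Nat.centralBinom_eq_neg_four_pow_mul_choose {K : Type*} [Field K] [CharZero K] (n : ℕ) :
    (centralBinom n : K) = (-4) ^ n * Ring.choose (-1 / 2 : K) n := by
  induction n with
  | zero => simp
  | succ n ih =>
    apply mul_left_cancel₀ (n.cast_add_one_ne_zero : (n + 1 : K) ≠ 0)
    have h := congrArg ((↑) : ℕ → K) (succ_mul_centralBinom_succ n)
    push_cast at h
    linear_combination h + 2 * (2 * n + 1) * ih -
      (-4) ^ (n + 1) * Ring.succ_mul_choose_succ (-1 / 2 : K) n

namespace PowerSeries

theorem eq_of_sq_eq_sq_of_constantCoeff_eq {R : Type*} [CommRing R] [NoZeroDivisors R]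
    [NeZero (2 : R)] {f g : R⟦X⟧} (h : f ^ 2 = g ^ 2)
    (hc : constantCoeff f = constantCoeff g) (hc₀ : constantCoeff f ≠ 0) : f = g := by
  refine (sq_eq_sq_iff_eq_or_eq_neg.mp h).resolve_right fun hfg ↦ hc₀ ?_
  have : 2 * constantCoeff f = 0 := by
    rw [two_mul]
    nth_rw 2 [hc]
    rw [hfg, map_neg, neg_add_cancel]
  exact (mul_eq_zero.mp this).resolve_left two_ne_zero

@[simp]
theorem constantCoeff_rescale {R : Type*} [CommSemiring R] (a : R) (f : R⟦X⟧) :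
    constantCoeff (rescale a f) = constantCoeff f := by
  rw [← coeff_zero_eq_constantCoeff_apply, coeff_rescale, pow_zero, one_mul,
    coeff_zero_eq_constantCoeff_apply]

noncomputable def centralBinomSeries (R : Type*) [Semiring R] : R⟦X⟧ :=
  mk fun n ↦ (centralBinom n : R)

@[simp]
theorem coeff_centralBinomSeries {R : Type*} [Semiring R] (n : ℕ) :
    coeff n (centralBinomSeries R) = centralBinom n :=
  coeff_mk _ _

@[simp]
theorem constantCoeff_centralBinomSeries {R : Type*} [Semiring R] :
    constantCoeff (centralBinomSeries R) = 1 := by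
  simp [← coeff_zero_eq_constantCoeff_apply]

section centralBinomSeries

variable {K : Type*} [Field K] [CharZero K]

theorem centralBinomSeries_eq_rescale_binomialSeries :
    centralBinomSeries K = rescale (-4) (binomialSeries K (-1 / 2 : K)) := by
  ext n
  simp [coeff_rescale, centralBinom_eq_neg_four_pow_mul_choose]

theorem centralBinomSeries_sq_mul_one_sub_four_mul_X :
    centralBinomSeries K ^ 2 * (1 - 4 * X) = 1 := by
  have h : (1 - 4 * X : K⟦X⟧) = rescale (-4) (binomialSeries K (1 : K)) := by
    rw [show (1 : K) = ((1 : ℕ) : K) from Nat.cast_one.symm, binomialSeries_nat]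
    simp only [pow_one, map_add, map_one, rescale_X, map_neg, map_ofNat]
    ring
  rw [h, centralBinomSeries_eq_rescale_binomialSeries, ← map_pow, ← map_mul, sq,
    ← binomialSeries_add, ← binomialSeries_add]
  norm_num

theorem rescale_neg_one_centralBinomSeries_mul_self :
    rescale (-1) (centralBinomSeries K) * centralBinomSeries K =
      expand 2 two_ne_zero (rescale 4 (centralBinomSeries K)) := by
  set c := centralBinomSeries K
  have hc : c ^ 2 * (1 - 4 * X) = 1 := centralBinomSeries_sq_mul_one_sub_four_mul_X
  have hneg := congrArg (rescale (-1)) hc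
  have hexp := congrArg (fun f ↦ expand 2 two_ne_zero (rescale 4 f)) hc
  simp only [map_mul, map_pow, map_sub, map_one, map_ofNat, rescale_X, map_neg, expand_X]
    at hneg hexp
  have hL : (rescale (-1) c * c) ^ 2 * (1 - 16 * X ^ 2) = 1 := by
    linear_combination (rescale (-1) c) ^ 2 * (1 + 4 * X) * hc + hneg
  have hR : (expand 2 two_ne_zero (rescale 4 c)) ^ 2 * (1 - 16 * X ^ 2) = 1 := by
    linear_combination hexp
  refine eq_of_sq_eq_sq_of_constantCoeff_eq
    (mul_right_cancel₀ (right_ne_zero_of_mul_eq_one hR) (hL.trans hR.symm)) ?_ ?_ <;>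
  simp [c, constantCoeff_expand]

end centralBinomSeries

end PowerSeries

theorem Nat.alternating_sum_centralBinom_mul_centralBinom_two_mul (m : ℕ) :
    ∑ k ∈ range (2 * m + 1), (-1 : ℤ) ^ k * centralBinom k * centralBinom (2 * m - k) =
      4 ^ m * centralBinom m := by
  have h := congrArg (coeff (2 * m)) (rescale_neg_one_centralBinomSeries_mul_self (K := ℚ))
  rw [coeff_mul, Finset.Nat.sum_antidiagonal_eq_sum_range_succ
    (fun i j ↦ coeff i (rescale (-1) (centralBinomSeries ℚ)) * coeff j (centralBinomSeries ℚ)),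
    coeff_expand_mul] at h
  simp only [coeff_rescale, coeff_centralBinomSeries] at h
  exact_mod_cast h

theorem stmt_1 (s : ℕ) (hs : Even s) :
    ∑ k ∈ Finset.range (s + 1),
      (-1 : ℤ) ^ k * (2 * k).choose k * (2 * (s - k)).choose (s - k)
    = 2 ^ s * s.choose (s / 2) := by
  obtain ⟨m, rfl⟩ := hs
  rw [← two_mul, Nat.mul_div_cancel_left m two_pos, pow_mul]
  simp only [← centralBinom_eq_two_mul_choose]
  exact alternating_sum_centralBinom_mul_centralBinom_two_mul m
end

section
/- Let d be a positive integer and define δ(t) = Σ_{j=0}^{d} C(d,j)²·C(2d,2j)^{-1}·t^j·(1-t)^{d-j} for t ∈ [0,1]. Then the minimum of δ(t) over t ∈ [0,1] equals 2^d / C(2d,d), and it is attained at t = 1/2. -/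
/-!
Write `c n` for the central binomial coefficient. Since `C(d,j)² / C(2d,2j) = c j c (d-j) / C(2d,d)`,
`C(2d,d) δ(t)` is the convolution `L d = ∑_{i+k=d} (c i tⁱ) (c k (1-t)ᵏ)`, the coefficient of `Xᵈ`
in `(1 - 4tX)^{-1/2} (1 - 4(1-t)X)^{-1/2}`. Each factor is hypergeometric, which forces the
three-term recurrence `(n+2) L (n+2) = (4n+6) L (n+1) - 16 (n+1) t (1-t) L n`. The sum
`2ⁿ ∑_k C(n,2k) c k (t - 1/2)^{2k}` satisfies the same recurrence and initial values, hence equals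
`L n`; as a polynomial in `(t - 1/2)²` with nonnegative coefficients and constant term `2ⁿ`, it is
at least `2ⁿ`, with equality at `t = 1/2`.
-/

open Finset
open scoped Nat

theorem Nat.add_one_mul_choose_add_mul_choose (n j : ℕ) :
    (n + 1) * n.choose j + j * (n + 1).choose j = (n + 1) * (n + 1).choose j := by
  cases j with
  | zero => simp
  | succ i =>
    rw [mul_comm (i + 1), ← Nat.add_one_mul_choose_eq, Nat.choose_succ_succ']
    ring

theorem Nat.centralBinom_mul_factorial_mul_factorial (n : ℕ) :
    n.centralBinom * n ! * n ! = (2 * n)! := by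
  have h := Nat.choose_mul_factorial_mul_factorial (show n ≤ 2 * n by omega)
  rwa [show 2 * n - n = n by omega, ← Nat.centralBinom_eq_two_mul_choose] at h

theorem Nat.choose_two_mul_mul_centralBinom_mul_centralBinom (i k : ℕ) :
    (2 * (i + k)).choose (2 * i) * i.centralBinom * k.centralBinom
      = (i + k).centralBinom * (i + k).choose i ^ 2 := by
  apply Nat.eq_of_mul_eq_mul_right (show 0 < (i ! * k !) ^ 2 by positivity)
  have h2 := Nat.choose_mul_factorial_mul_factorial (show 2 * i ≤ 2 * (i + k) by omega)
  rw [show 2 * (i + k) - 2 * i = 2 * k by omega] at h2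
  have h1 := Nat.choose_mul_factorial_mul_factorial (show i ≤ i + k by omega)
  rw [show i + k - i = k by omega] at h1
  calc (2 * (i + k)).choose (2 * i) * i.centralBinom * k.centralBinom * (i ! * k !) ^ 2
      = (2 * (i + k)).choose (2 * i) * (i.centralBinom * i ! * i !)
          * (k.centralBinom * k ! * k !) := by ring
    _ = (i + k).centralBinom * (i + k)! * (i + k)! := by
      rw [Nat.centralBinom_mul_factorial_mul_factorial, Nat.centralBinom_mul_factorial_mul_factorial,
        h2, Nat.centralBinom_mul_factorial_mul_factorial]
    _ = _ := by rw [← h1]; ring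

/-- The multinomial coefficient `n! / (k! k! (n - 2k)!)`. -/
def diagTrinomial (n k : ℕ) : ℕ := n.choose (2 * k) * k.centralBinom

theorem diagTrinomial_zero_right (n : ℕ) : diagTrinomial n 0 = 1 := by
  simp [diagTrinomial]

theorem diagTrinomial_eq_zero_of_lt {n k : ℕ} (h : n < k) : diagTrinomial n k = 0 := by
  simp [diagTrinomial, Nat.choose_eq_zero_of_lt (by omega : n < 2 * k)]

theorem add_one_mul_diagTrinomial_add_mul (n k : ℕ) :
    (n + 1) * diagTrinomial n k + 2 * k * diagTrinomial (n + 1) k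
      = (n + 1) * diagTrinomial (n + 1) k := by
  simp only [diagTrinomial, ← mul_assoc, ← add_mul, Nat.add_one_mul_choose_add_mul_choose]

theorem sq_mul_diagTrinomial_succ (n k : ℕ) :
    (k + 1) ^ 2 * diagTrinomial (n + 2) (k + 1) = (n + 2) * (n + 1) * diagTrinomial n k := by
  have hc := Nat.succ_mul_centralBinom_succ k
  have h1 := Nat.add_one_mul_choose_eq n (2 * k)
  have h2 : (n + 2) * (n + 1).choose (2 * k + 1) = (n + 2).choose (2 * (k + 1)) * (2 * k + 2) :=
    Nat.add_one_mul_choose_eq (n + 1) (2 * k + 1)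
  unfold diagTrinomial
  apply Nat.eq_of_mul_eq_mul_left (show 0 < 2 * (2 * k + 1) by omega)
  linear_combination 2 * (2 * k + 1) * (k + 1) * (n + 2).choose (2 * (k + 1)) * hc
    - 2 * (2 * k + 1) * k.centralBinom * (2 * k + 1) * h2
    - 2 * (2 * k + 1) * k.centralBinom * (n + 2) * h1

theorem diagTrinomial_recurrence (n k : ℕ) :
    (n + 2) * diagTrinomial (n + 2) (k + 1) + (n + 1) * diagTrinomial n (k + 1)
      = (2 * n + 3) * diagTrinomial (n + 1) (k + 1) + 4 * (n + 1) * diagTrinomial n k := by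
  have e1 := add_one_mul_diagTrinomial_add_mul n (k + 1)
  have e2 := add_one_mul_diagTrinomial_add_mul (n + 1) (k + 1)
  have e3 := sq_mul_diagTrinomial_succ n k
  apply Nat.eq_of_mul_eq_mul_left (show 0 < n + 2 by omega)
  linear_combination (n + 2) * e1 - (n + 2 * k + 4) * e2 + 4 * e3

section DiagTrinomialSum

variable {R : Type*} [CommRing R]

def diagTrinomialSum (n : ℕ) (w : R) : R := ∑ k ∈ range (n + 1), (diagTrinomial n k : R) * w ^ k

theorem diagTrinomialSum_eq_sum_range {n N : ℕ} (h : n < N) (w : R) :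
    diagTrinomialSum n w = ∑ k ∈ range N, (diagTrinomial n k : R) * w ^ k := by
  refine sum_subset (range_subset_range.2 h) fun k _ hk => ?_
  rw [diagTrinomial_eq_zero_of_lt (by simpa using hk), Nat.cast_zero, zero_mul]

theorem diagTrinomialSum_zero (n : ℕ) : diagTrinomialSum n (0 : R) = 1 := by
  simp [diagTrinomialSum, sum_range_succ', diagTrinomial_zero_right]

theorem diagTrinomialSum_recurrence (n : ℕ) (w : R) :
    (n + 2) * diagTrinomialSum (n + 2) w
      = (2 * n + 3) * diagTrinomialSum (n + 1) w
        - (n + 1) * (1 - 4 * w) * diagTrinomialSum n w := by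
  have hS (m : ℕ) (hm : m < n + 3) : diagTrinomialSum m w
      = 1 + ∑ k ∈ range (n + 2), (diagTrinomial m (k + 1) : R) * w ^ (k + 1) := by
    rw [diagTrinomialSum_eq_sum_range hm, sum_range_succ', diagTrinomial_zero_right]
    simp only [Nat.cast_one, pow_zero, mul_one, add_comm]
  have hwS : w * diagTrinomialSum n w
      = ∑ k ∈ range (n + 2), (diagTrinomial n k : R) * w ^ (k + 1) := by
    rw [diagTrinomialSum_eq_sum_range (show n < n + 2 by omega), mul_sum]
    exact sum_congr rfl fun k _ => by ring
  have hcoeff : (n + 2) * ∑ k ∈ range (n + 2), (diagTrinomial (n + 2) (k + 1) : R) * w ^ (k + 1)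
      + (n + 1) * ∑ k ∈ range (n + 2), (diagTrinomial n (k + 1) : R) * w ^ (k + 1)
      = (2 * n + 3) * ∑ k ∈ range (n + 2), (diagTrinomial (n + 1) (k + 1) : R) * w ^ (k + 1)
        + 4 * (n + 1) * ∑ k ∈ range (n + 2), (diagTrinomial n k : R) * w ^ (k + 1) := by
    simp only [mul_sum, ← sum_add_distrib]
    refine sum_congr rfl fun k _ => ?_
    have h := congrArg (Nat.cast : ℕ → R) (diagTrinomial_recurrence n k)
    push_cast at h
    linear_combination w ^ (k + 1) * h
  linear_combination (n + 2) * hS (n + 2) (by omega) - (2 * n + 3) * hS (n + 1) (by omega)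
    + (n + 1) * hS n (by omega) - 4 * (n + 1) * hwS + hcoeff

theorem one_le_diagTrinomialSum [PartialOrder R] [IsOrderedRing R] (n : ℕ) {w : R} (hw : 0 ≤ w) :
    1 ≤ diagTrinomialSum n w := by
  rw [diagTrinomialSum, sum_range_succ', diagTrinomial_zero_right]
  simp only [Nat.cast_one, pow_zero, mul_one, le_add_iff_nonneg_left]
  exact sum_nonneg fun k _ => by positivity

end DiagTrinomialSum

section Convolution

variable {R : Type*} [CommRing R] {a b : ℕ → R} {α β x y : R}

theorem sum_antidiagonal_succ_fst_mul
    (ha : ∀ i : ℕ, (i + 1) * a (i + 1) = x * ((α * i + β) * a i)) (n : ℕ) :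
    ∑ p ∈ antidiagonal (n + 1), (p.1 : R) * a p.1 * b p.2
      = x * ∑ p ∈ antidiagonal n, (α * p.1 + β) * a p.1 * b p.2 := by
  rw [Nat.sum_antidiagonal_succ, mul_sum]
  simp only [Nat.cast_zero, zero_mul, zero_add, Nat.cast_add_one, ha, mul_assoc]

theorem sum_antidiagonal_succ_snd_mul
    (hb : ∀ k : ℕ, (k + 1) * b (k + 1) = y * ((α * k + β) * b k)) (n : ℕ) :
    ∑ p ∈ antidiagonal (n + 1), (p.2 : R) * a p.1 * b p.2
      = y * ∑ p ∈ antidiagonal n, (α * p.2 + β) * a p.1 * b p.2 := by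
  rw [Nat.sum_antidiagonal_succ', mul_sum]
  simp only [Nat.cast_zero, zero_mul, zero_add, Nat.cast_add_one]
  exact sum_congr rfl fun p _ => by linear_combination a p.1 * hb p.2

theorem convolution_recurrence
    (ha : ∀ i : ℕ, (i + 1) * a (i + 1) = x * ((α * i + β) * a i))
    (hb : ∀ k : ℕ, (k + 1) * b (k + 1) = y * ((α * k + β) * b k)) (n : ℕ) :
    (n + 2) * ∑ p ∈ antidiagonal (n + 2), a p.1 * b p.2
      = (α * (n + 1) + β) * (x + y) * ∑ p ∈ antidiagonal (n + 1), a p.1 * b p.2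
        - α * (α * n + 2 * β) * x * y * ∑ p ∈ antidiagonal n, a p.1 * b p.2 := by
  -- The two weighted sums `Q`, `Q'` satisfy first-order recurrences and add up to `m * P m`;
  -- eliminating them leaves a recurrence for `P` alone.
  set P := fun m : ℕ => ∑ p ∈ antidiagonal m, a p.1 * b p.2
  set Q := fun m : ℕ => ∑ p ∈ antidiagonal m, (p.1 : R) * a p.1 * b p.2
  set Q' := fun m : ℕ => ∑ p ∈ antidiagonal m, (p.2 : R) * a p.1 * b p.2
  have hPQ (m : ℕ) : (m : R) * P m = Q m + Q' m := by
    simp only [P, Q, Q', mul_sum, ← sum_add_distrib]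
    refine sum_congr rfl fun p hp => ?_
    rw [← mem_antidiagonal.1 hp]
    push_cast; ring
  have hQ (m : ℕ) : Q (m + 1) = x * (α * Q m + β * P m) := by
    simp only [Q, P, sum_antidiagonal_succ_fst_mul ha, mul_sum, ← sum_add_distrib]
    exact sum_congr rfl fun p _ => by ring
  have hQ' (m : ℕ) : Q' (m + 1) = y * (α * Q' m + β * P m) := by
    simp only [Q', P, sum_antidiagonal_succ_snd_mul hb, mul_sum, ← sum_add_distrib]
    exact sum_congr rfl fun p _ => by ring
  have e2 := hPQ (n + 2)
  have e1 := hPQ (n + 1)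
  push_cast at e2 e1
  rw [hQ, hQ'] at e2
  linear_combination e2 - α * (x + y) * e1 - α * y * hQ n - α * x * hQ' n + α ^ 2 * x * y * hPQ n

end Convolution

theorem eq_of_add_two_mul_recurrence {K : Type*} [CommRing K] [IsDomain K] [CharZero K]
    {u v f g : ℕ → K}
    (hu : ∀ n : ℕ, (n + 2) * u (n + 2) = f n * u (n + 1) + g n * u n)
    (hv : ∀ n : ℕ, (n + 2) * v (n + 2) = f n * v (n + 1) + g n * v n)
    (h0 : u 0 = v 0) (h1 : u 1 = v 1) : u = v := by
  suffices h : ∀ n, u n = v n ∧ u (n + 1) = v (n + 1) from funext fun n => (h n).1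
  intro n
  induction n with
  | zero => exact ⟨h0, h1⟩
  | succ n ih =>
    refine ⟨ih.2, mul_left_cancel₀ (show (n + 2 : K) ≠ 0 by norm_cast) ?_⟩
    rw [hu, hv, ih.1, ih.2]

theorem sum_antidiagonal_centralBinom_mul_eq {K : Type*} [Field K] [CharZero K] (n : ℕ) (t : K) :
    ∑ p ∈ antidiagonal n, (p.1.centralBinom * t ^ p.1) * (p.2.centralBinom * (1 - t) ^ p.2)
      = 2 ^ n * diagTrinomialSum n ((t - 1 / 2) ^ 2) := by
  have hc (s : K) (i : ℕ) : (i + 1) * ((i + 1).centralBinom * s ^ (i + 1))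
      = s * ((4 * i + 2) * (i.centralBinom * s ^ i)) := by
    have h := congrArg (Nat.cast : ℕ → K) (Nat.succ_mul_centralBinom_succ i)
    push_cast at h
    linear_combination s ^ (i + 1) * h
  refine congrFun (eq_of_add_two_mul_recurrence
    (u := fun n => ∑ p ∈ antidiagonal n,
      (p.1.centralBinom * t ^ p.1) * (p.2.centralBinom * (1 - t) ^ p.2))
    (v := fun n => 2 ^ n * diagTrinomialSum n ((t - 1 / 2) ^ 2))
    (f := fun n : ℕ => (4 * n + 6 : K)) (g := fun n : ℕ => -16 * (n + 1) * t * (1 - t))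
    (fun n => ?_) (fun n => ?_) ?_ ?_) n
  · have h := convolution_recurrence (a := fun i => i.centralBinom * t ^ i)
      (b := fun k => k.centralBinom * (1 - t) ^ k) (hc t) (hc (1 - t)) n
    linear_combination h
  · linear_combination 2 ^ (n + 2) * diagTrinomialSum_recurrence n ((t - 1 / 2) ^ 2)
  · simp [diagTrinomialSum, diagTrinomial_zero_right]
  · simp [diagTrinomialSum, diagTrinomial, sum_range_succ, Nat.antidiagonal_succ,
      show Nat.centralBinom 1 = 2 from rfl]
    ring

theorem sum_choose_sq_mul_inv_choose_eq (d : ℕ) (t : ℝ) :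
    ∑ j ∈ range (d + 1),
        (d.choose j : ℝ) ^ 2 * ((2 * d).choose (2 * j) : ℝ)⁻¹ * t ^ j * (1 - t) ^ (d - j)
      = 2 ^ d * diagTrinomialSum d ((t - 1 / 2) ^ 2) / ((2 * d).choose d : ℝ) := by
  rw [← sum_antidiagonal_centralBinom_mul_eq, sum_div, Nat.sum_antidiagonal_eq_sum_range_succ
    (fun i k => (i.centralBinom * t ^ i) * (k.centralBinom * (1 - t) ^ k) / ((2 * d).choose d : ℝ))]
  refine sum_congr rfl fun j hj => ?_
  obtain ⟨k, rfl⟩ := Nat.exists_eq_add_of_le (Nat.lt_succ_iff.1 (mem_range.1 hj))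
  have h := congrArg (Nat.cast : ℕ → ℝ) (Nat.choose_two_mul_mul_centralBinom_mul_centralBinom j k)
  rw [Nat.centralBinom_eq_two_mul_choose (j + k)] at h
  push_cast at h
  have h1 : ((2 * (j + k)).choose (2 * j) : ℝ) ≠ 0 :=
    Nat.cast_ne_zero.2 (Nat.choose_pos (by omega)).ne'
  have h2 : ((2 * (j + k)).choose (j + k) : ℝ) ≠ 0 :=
    Nat.cast_ne_zero.2 (Nat.choose_pos (by omega)).ne'
  rw [Nat.add_sub_cancel_left]
  field_simp
  linear_combination -t ^ j * (1 - t) ^ k * h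

theorem stmt_4_general (d : ℕ) :
    IsLeast
      ((fun t : ℝ => ∑ j ∈ Finset.range (d + 1),
          (d.choose j : ℝ) ^ 2 * ((2 * d).choose (2 * j) : ℝ)⁻¹ * t ^ j * (1 - t) ^ (d - j)) ''
        Set.Icc (0 : ℝ) 1)
      (2 ^ d / ((2 * d).choose d : ℝ)) ∧
    ∑ j ∈ Finset.range (d + 1),
        (d.choose j : ℝ) ^ 2 * ((2 * d).choose (2 * j) : ℝ)⁻¹ * (1 / 2 : ℝ) ^ j *
          (1 - 1 / 2 : ℝ) ^ (d - j)
      = 2 ^ d / ((2 * d).choose d : ℝ) := by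
  have hhalf := (sum_choose_sq_mul_inv_choose_eq d (1 / 2)).trans (by
    rw [sub_self, zero_pow two_ne_zero, diagTrinomialSum_zero, mul_one])
  refine ⟨⟨⟨1 / 2, ⟨by norm_num, by norm_num⟩, hhalf⟩, ?_⟩, hhalf⟩
  rintro _ ⟨t, -, rfl⟩
  dsimp only
  rw [sum_choose_sq_mul_inv_choose_eq]
  gcongr
  exact le_mul_of_one_le_right (by positivity) (one_le_diagTrinomialSum d (sq_nonneg _))

theorem stmt_4 (d : ℕ) (hd : 0 < d) :
    IsLeast
      ((fun t : ℝ => ∑ j ∈ Finset.range (d + 1),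
          (d.choose j : ℝ) ^ 2 * ((2 * d).choose (2 * j) : ℝ)⁻¹ * t ^ j * (1 - t) ^ (d - j)) ''
        Set.Icc (0 : ℝ) 1)
      (2 ^ d / ((2 * d).choose d : ℝ)) ∧
    ∑ j ∈ Finset.range (d + 1),
        (d.choose j : ℝ) ^ 2 * ((2 * d).choose (2 * j) : ℝ)⁻¹ * (1 / 2 : ℝ) ^ j *
          (1 - 1 / 2 : ℝ) ^ (d - j)
      = 2 ^ d / ((2 * d).choose d : ℝ) :=
  stmt_4_general d
end

section
/- Let d be a positive integer and δ(t) = Σ_{j=0}^{d} C(d,j)²·C(2d,2j)^{-1}·t^j·(1-t)^{d-j}. After the substitution t = 1/2 + x, δ is a polynomial in x in which the coefficient of x^s is 0 when s is odd, and equals 2^d·C(d,s)·C(s,s/2)/C(2d,d) when s is even. -/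
/-!
Since `C(d,j)² / C(2d,2j) = C(2j,j) C(2d-2j,d-j) / C(2d,d)`, the polynomial `C(2d,d) δ` is
`P_d(a, b) = ∑_{i+j=d} C(2i,i) C(2j,j) aⁱ bʲ` at `a = 1/2 + x`, `b = 1/2 - x`, the
coefficient of `z^d` in `(1 - 4az)^(-1/2) (1 - 4bz)^(-1/2)`. Splitting `d P_d` into the parts
weighted by `i` and by `j`, each of which satisfies a first-order recurrence by
`(n+1) C(2n+2,n+1) = 2(2n+1) C(2n,n)`, gives the three-term recurrence
`(d+2) P_{d+2} = (4d+6)(a+b) P_{d+1} - 16(d+1) ab P_d`,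
and since `a + b = 1` and `4ab = 1 - 4x²` it becomes a recurrence on the coefficients of `x^s`.
The claimed coefficients satisfy the same recurrence (Pascal's rule plus
`(k+1) C(d,k+1) + k C(d,k) = d C(d,k)`), so both agree by induction on `d`.
-/

open Finset Polynomial

section CentralBinomConv

variable {R : Type*} [CommRing R]

def centralBinomConv (a b : R) (d : ℕ) : R :=
  ∑ p ∈ antidiagonal d, (p.1.centralBinom * p.2.centralBinom : R) * a ^ p.1 * b ^ p.2

def weightedCentralBinomConv (a b : R) (d : ℕ) : R :=
  ∑ p ∈ antidiagonal d,
    (p.1 : R) * ((p.1.centralBinom * p.2.centralBinom : R) * a ^ p.1 * b ^ p.2)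

lemma centralBinomConv_zero (a b : R) : centralBinomConv a b 0 = 1 := by
  simp [centralBinomConv]

lemma centralBinomConv_one (a b : R) : centralBinomConv a b 1 = 2 * (a + b) := by
  simp [centralBinomConv, Nat.sum_antidiagonal_succ, Nat.centralBinom_eq_two_mul_choose]
  ring

lemma centralBinomConv_comm (a b : R) (d : ℕ) :
    centralBinomConv b a d = centralBinomConv a b d := by
  rw [centralBinomConv, ← Nat.sum_antidiagonal_swap]
  exact sum_congr rfl fun p _ ↦ by simp only [Prod.fst_swap, Prod.snd_swap]; ring

lemma weightedCentralBinomConv_add_swap (a b : R) (d : ℕ) :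
    weightedCentralBinomConv a b d + weightedCentralBinomConv b a d
      = d * centralBinomConv a b d := by
  have hswap : weightedCentralBinomConv b a d = ∑ p ∈ antidiagonal d,
      (p.2 : R) * ((p.1.centralBinom * p.2.centralBinom : R) * a ^ p.1 * b ^ p.2) := by
    rw [weightedCentralBinomConv, ← Nat.sum_antidiagonal_swap]
    exact sum_congr rfl fun p _ ↦ by simp only [Prod.fst_swap, Prod.snd_swap]; ring
  rw [hswap, weightedCentralBinomConv, ← sum_add_distrib, centralBinomConv, mul_sum]
  refine sum_congr rfl fun p hp ↦ ?_
  rw [← mem_antidiagonal.mp hp]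
  push_cast
  ring

lemma weightedCentralBinomConv_succ (a b : R) (d : ℕ) :
    weightedCentralBinomConv a b (d + 1)
      = 2 * a * (2 * weightedCentralBinomConv a b d + centralBinomConv a b d) := by
  rw [weightedCentralBinomConv, Nat.sum_antidiagonal_succ, weightedCentralBinomConv,
    centralBinomConv, mul_sum, ← sum_add_distrib, mul_sum]
  simp only [Nat.cast_zero, zero_mul, zero_add]
  refine sum_congr rfl fun p _ ↦ ?_
  have h := congrArg (Nat.cast : ℕ → R) (Nat.succ_mul_centralBinom_succ p.1)
  push_cast at h ⊢
  linear_combination (p.2.centralBinom * a ^ (p.1 + 1) * b ^ p.2 : R) * h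

theorem centralBinomConv_recurrence (a b : R) (d : ℕ) :
    ((d : R) + 2) * centralBinomConv a b (d + 2)
      = (4 * d + 6) * (a + b) * centralBinomConv a b (d + 1)
        - 16 * (d + 1) * (a * b) * centralBinomConv a b d := by
  have h₀ := weightedCentralBinomConv_add_swap a b d
  have h₁ := weightedCentralBinomConv_add_swap a b (d + 1)
  have h₂ := weightedCentralBinomConv_add_swap a b (d + 2)
  have ha₁ := weightedCentralBinomConv_succ a b d
  have hb₁ := weightedCentralBinomConv_succ b a d
  have ha₂ := weightedCentralBinomConv_succ a b (d + 1)
  have hb₂ := weightedCentralBinomConv_succ b a (d + 1)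
  rw [centralBinomConv_comm] at hb₁ hb₂
  push_cast at h₁ h₂
  linear_combination
    -h₂ + ha₂ + hb₂ + 4 * (a + b) * h₁ - 4 * b * ha₁ - 4 * a * hb₁ - 16 * a * b * h₀

end CentralBinomConv

open scoped Nat

lemma choose_sq_mul_centralBinom (j k : ℕ) :
    (j + k).choose j ^ 2 * (j + k).centralBinom
      = (2 * (j + k)).choose (2 * j) * j.centralBinom * k.centralBinom := by
  have hfac (n : ℕ) : n.centralBinom * n ! * n ! = (2 * n)! := by
    rw [Nat.centralBinom_eq_two_mul_choose, two_mul, Nat.add_choose_mul_factorial_mul_factorial]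
  have hjk : (j + k).choose j * k ! * j ! = (j + k)! := by
    rw [add_comm j k, Nat.add_choose_mul_factorial_mul_factorial]
  have h2 : (2 * (j + k)).choose (2 * j) * (2 * k)! * (2 * j)! = (2 * (j + k))! := by
    rw [mul_add, add_comm (2 * j), Nat.add_choose_mul_factorial_mul_factorial]
  refine Nat.eq_of_mul_eq_mul_right (by positivity : 0 < (j ! * k !) ^ 2) ?_
  calc (j + k).choose j ^ 2 * (j + k).centralBinom * (j ! * k !) ^ 2
      = ((j + k).choose j * k ! * j !) ^ 2 * (j + k).centralBinom := by ring
    _ = (2 * (j + k))! := by rw [hjk, ← hfac]; ring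
    _ = (2 * (j + k)).choose (2 * j) * j.centralBinom * k.centralBinom * (j ! * k !) ^ 2 := by
        rw [← h2, ← hfac, ← hfac]; ring

lemma choose_sq_mul_inv_choose_two_mul (d j : ℕ) (hj : j ≤ d) :
    (d.choose j : ℝ) ^ 2 * ((2 * d).choose (2 * j) : ℝ)⁻¹
      = ((2 * d).choose d : ℝ)⁻¹ * (j.centralBinom * (d - j).centralBinom) := by
  obtain ⟨k, rfl⟩ := Nat.exists_eq_add_of_le hj
  have h := congrArg (Nat.cast : ℕ → ℝ) (choose_sq_mul_centralBinom j k)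
  rw [Nat.centralBinom_eq_two_mul_choose] at h
  have h₁ : ((2 * (j + k)).choose (2 * j) : ℝ) ≠ 0 := by
    exact_mod_cast (Nat.choose_pos (by omega)).ne'
  have h₂ : ((2 * (j + k)).choose (j + k) : ℝ) ≠ 0 := by
    exact_mod_cast (Nat.choose_pos (by omega)).ne'
  rw [Nat.add_sub_cancel_left]
  field_simp
  push_cast at h
  linear_combination h

lemma succ_mul_choose_succ_add_mul_choose (n k : ℕ) :
    (k + 1) * n.choose (k + 1) + k * n.choose k = n * n.choose k := by
  have h := Nat.add_one_mul_choose_eq n k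
  rw [Nat.choose_succ_succ'] at h
  linarith

/-- `C(2d,d)` times the coefficient of `x^s` in `δ`. -/
noncomputable def scaledDeltaCoeff (d s : ℕ) : ℝ :=
  if Odd s then 0 else 2 ^ d * d.choose s * s.choose (s / 2)

lemma scaledDeltaCoeff_recurrence (d s : ℕ) :
    ((d : ℝ) + 2) * scaledDeltaCoeff (d + 2) s
      = (4 * d + 6) * scaledDeltaCoeff (d + 1) s - 4 * (d + 1) * scaledDeltaCoeff d s
        + 16 * (d + 1) * (if 2 ≤ s then scaledDeltaCoeff d (s - 2) else 0) := by
  obtain ⟨m, rfl | rfl⟩ := Nat.even_or_odd' s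
  · rcases m with _ | m
    · simp [scaledDeltaCoeff]
      ring
    · have hc := congrArg (Nat.cast : ℕ → ℝ) (Nat.succ_mul_centralBinom_succ m)
      have hk := congrArg (Nat.cast : ℕ → ℝ) (succ_mul_choose_succ_add_mul_choose d (2 * m))
      have p₁ : (d + 1).choose (2 * m + 2) = d.choose (2 * m + 1) + d.choose (2 * m + 2) :=
        Nat.choose_succ_succ' d (2 * m + 1)
      have p₂ : (d + 2).choose (2 * m + 2)
          = d.choose (2 * m) + 2 * d.choose (2 * m + 1) + d.choose (2 * m + 2) := by
        rw [Nat.choose_succ_succ' (d + 1) (2 * m + 1), Nat.choose_succ_succ' d (2 * m), p₁]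
        ring
      have e₀ : ¬ Odd (2 * m) := Nat.not_odd_iff_even.mpr (even_two_mul m)
      have e₁ : ¬ Odd (2 * m + 2) := Nat.not_odd_iff_even.mpr ⟨m + 1, by ring⟩
      rw [Nat.centralBinom_eq_two_mul_choose, Nat.centralBinom_eq_two_mul_choose] at hc
      rw [show 2 * (m + 1) = 2 * m + 2 by ring] at hc ⊢
      simp only [scaledDeltaCoeff, if_neg e₀, if_neg e₁, show (2 * m + 2) / 2 = m + 1 by omega,
        show 2 * m + 2 - 2 = 2 * m by omega, show 2 ≤ 2 * m + 2 by omega, if_true,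
        show (2 * m) / 2 = m by omega, p₁, p₂]
      push_cast at hc hk ⊢
      refine mul_left_cancel₀ (by positivity : ((m : ℝ) + 1) ≠ 0) ?_
      linear_combination
        (2 ^ d * 4 * ((d.choose (2 * m + 1) : ℝ) + (d + 2) * d.choose (2 * m))) * hc
          + (2 ^ d * 8 * ((2 * m).choose m : ℝ)) * hk
  · have h₁ : Odd (2 * m + 1) := odd_two_mul_add_one m
    by_cases h : 2 ≤ 2 * m + 1
    · have h₂ : ¬ Even (2 * m - 1) := Nat.not_even_iff_odd.mpr ⟨m - 1, by omega⟩
      simp [scaledDeltaCoeff, h, h₁, h₂]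
    · simp [scaledDeltaCoeff, h, h₁]

lemma coeff_centralBinomConv_half_recurrence (d s : ℕ) :
    ((d : ℝ) + 2) * (centralBinomConv (C (1 / 2 : ℝ) + X) (C (1 / 2) - X) (d + 2)).coeff s
      = (4 * d + 6) * (centralBinomConv (C (1 / 2 : ℝ) + X) (C (1 / 2) - X) (d + 1)).coeff s
        - 4 * (d + 1) * (centralBinomConv (C (1 / 2 : ℝ) + X) (C (1 / 2) - X) d).coeff s
        + 16 * (d + 1) * (if 2 ≤ s then
            (centralBinomConv (C (1 / 2 : ℝ) + X) (C (1 / 2) - X) d).coeff (s - 2) else 0) := by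
  set P := centralBinomConv (C (1 / 2 : ℝ) + X) (C (1 / 2) - X)
  have hhalf : (2 : ℝ[X]) * C (1 / 2) = 1 := by
    rw [← C_ofNat, ← C_mul]; norm_num
  have h := centralBinomConv_recurrence (C (1 / 2 : ℝ) + X) (C (1 / 2) - X) d
  have h' : C ((d : ℝ) + 2) * P (d + 2) = C (4 * (d : ℝ) + 6) * P (d + 1)
      - C (4 * ((d : ℝ) + 1)) * P d + C (16 * ((d : ℝ) + 1)) * (X ^ 2 * P d) := by
    simp only [map_add, map_mul, map_natCast, map_ofNat, map_one]
    linear_combination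
      h + ((4 * d + 6) * P (d + 1) - 4 * (d + 1) * (2 * C (1 / 2) + 1) * P d) * hhalf
  simpa only [coeff_add, coeff_sub, coeff_C_mul, coeff_X_pow_mul'] using congrArg (coeff · s) h'

theorem coeff_centralBinomConv_half (d s : ℕ) :
    (centralBinomConv (C (1 / 2 : ℝ) + X) (C (1 / 2) - X) d).coeff s = scaledDeltaCoeff d s := by
  induction d using Nat.twoStepInduction generalizing s with
  | zero => rcases s with _ | s <;> simp [centralBinomConv_zero, scaledDeltaCoeff, coeff_one]
  | one =>
    have h : (C (1 / 2 : ℝ) + X) + (C (1 / 2) - X) = C 1 := by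
      rw [add_add_sub_cancel, ← C_add]; norm_num
    rw [centralBinomConv_one, h, ← C_ofNat, ← C_mul, coeff_C]
    rcases s with _ | _ | s <;> simp [scaledDeltaCoeff, Nat.choose_eq_zero_of_lt]
  | more d ih₀ ih₁ =>
    have h := coeff_centralBinomConv_half_recurrence d s
    simp only [ih₀, ih₁, ← scaledDeltaCoeff_recurrence] at h
    exact mul_left_cancel₀ (by positivity) h

theorem stmt_5_general (d : ℕ) (s : ℕ) :
    (∑ j ∈ Finset.range (d + 1),
        Polynomial.C ((d.choose j : ℝ) ^ 2 * ((2 * d).choose (2 * j) : ℝ)⁻¹) *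
          (Polynomial.C (1 / 2 : ℝ) + Polynomial.X) ^ j *
          (Polynomial.C (1 / 2 : ℝ) - Polynomial.X) ^ (d - j)).coeff s
    = if Odd s then 0
      else 2 ^ d * (d.choose s : ℝ) * (s.choose (s / 2) : ℝ) / ((2 * d).choose d : ℝ) := by
  have hδ : (∑ j ∈ range (d + 1),
        C ((d.choose j : ℝ) ^ 2 * ((2 * d).choose (2 * j) : ℝ)⁻¹) *
          (C (1 / 2 : ℝ) + X) ^ j * (C (1 / 2 : ℝ) - X) ^ (d - j))
      = C (((2 * d).choose d : ℝ)⁻¹)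
          * centralBinomConv (C (1 / 2 : ℝ) + X) (C (1 / 2) - X) d := by
    rw [centralBinomConv, Nat.sum_antidiagonal_eq_sum_range_succ
      (fun i j ↦ (i.centralBinom * j.centralBinom : ℝ[X]) * (C (1 / 2 : ℝ) + X) ^ i
        * (C (1 / 2) - X) ^ j), mul_sum]
    refine sum_congr rfl fun j hj ↦ ?_
    rw [choose_sq_mul_inv_choose_two_mul d j (Nat.lt_succ_iff.mp (mem_range.mp hj))]
    simp only [map_mul, map_natCast]
    ring
  rw [hδ, coeff_C_mul, coeff_centralBinomConv_half, scaledDeltaCoeff]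
  split_ifs <;> ring

theorem stmt_5 (d : ℕ) (hd : 0 < d) (s : ℕ) :
    (∑ j ∈ Finset.range (d + 1),
        Polynomial.C ((d.choose j : ℝ) ^ 2 * ((2 * d).choose (2 * j) : ℝ)⁻¹) *
          (Polynomial.C (1 / 2 : ℝ) + Polynomial.X) ^ j *
          (Polynomial.C (1 / 2 : ℝ) - Polynomial.X) ^ (d - j)).coeff s
    = if Odd s then 0
      else 2 ^ d * (d.choose s : ℝ) * (s.choose (s / 2) : ℝ) / ((2 * d).choose d : ℝ) :=
  stmt_5_general d s
end

section
/- For every fixed nonnegative integer k, the formal power series identity Σ_{d=0}^{∞} C(2d,d)·C(d,k)·y^d = C(2k,k)·y^k·(1-4y)^{-(k+1/2)} holds, in the sense that the d-th derivative at 0 of the function f_k(y) = C(2k,k)·y^k/(1-4y)^{k+1/2} equals C(2d,d)·C(d,k)·d!. -/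
open Polynomial Filter Topology Nat

/-!
Near `0` the function equals `C(2k,k) · y ^ k · (1 - 4y) ^ (-(k + 1/2))`. By Leibniz's rule only
the `k`-th derivative of `y ^ k` survives at `0`, contributing `C(d,k) · k!`, while the `m`-th
derivative of `(1 - 4y) ^ (-s)` at `0` is `4 ^ m` times the rising factorial `(s)_m`. The identity
`C(2n,n) · n! = 4 ^ n · (1/2)_n` turns `C(2k,k) · k! · 4 ^ m · (k + 1/2)_m` into `C(2d,d) · d!`
for `d = k + m`.
-/

/-- Unlike `iteratedDeriv_comp_const_mul`, no smoothness of `f` is needed, so this applies to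
`rpow`, which is not smooth on all of `ℝ`. -/
theorem iteratedDeriv_comp_const_mul_field {𝕜 : Type*} [NontriviallyNormedField 𝕜] (n : ℕ)
    (f : 𝕜 → 𝕜) (c : 𝕜) :
    iteratedDeriv n (fun x => f (c * x)) = fun x => c ^ n * iteratedDeriv n f (c * x) := by
  induction n with
  | zero => simp
  | succ n ih =>
    ext x
    rw [iteratedDeriv_succ, ih, deriv_const_mul_field, iteratedDeriv_succ,
      deriv_comp_mul_left c (iteratedDeriv n f), smul_eq_mul, pow_succ]
    ring

theorem iteratedDeriv_const_sub_mul_rpow (a c r : ℝ) (n : ℕ) (y : ℝ) :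
    iteratedDeriv n (fun y => (a - c * y) ^ r) y
      = (-c) ^ n * (descPochhammer ℝ n).eval r * (a - c * y) ^ (r - n) := by
  rw [iteratedDeriv_comp_const_mul_field n (fun z => (a - z) ^ r),
    iteratedDeriv_comp_const_sub n (fun z => z ^ r)]
  dsimp only
  rw [iteratedDeriv_eq_iterate, Real.iter_deriv_rpow_const, smul_eq_mul, neg_pow]
  ring

theorem Nat.centralBinom_mul_factorial (n : ℕ) :
    (n.centralBinom * n ! : ℝ) = 4 ^ n * (ascPochhammer ℝ n).eval (1 / 2) := by
  induction n with
  | zero => simp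
  | succ n ih =>
    have h := congrArg (Nat.cast (R := ℝ)) (Nat.succ_mul_centralBinom_succ n)
    push_cast at h
    rw [ascPochhammer_succ_eval, Nat.factorial_succ, pow_succ]
    push_cast
    linear_combination (n ! : ℝ) * h + 2 * (2 * n + 1) * ih

theorem centralBinom_mul_factorial_add (k m : ℕ) :
    ((k + m).centralBinom * (k + m)! : ℝ)
      = k.centralBinom * k ! * 4 ^ m * (ascPochhammer ℝ m).eval ((k : ℝ) + 1 / 2) := by
  rw [Nat.centralBinom_mul_factorial, Nat.centralBinom_mul_factorial, ← ascPochhammer_mul,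
    eval_mul, eval_comp, eval_add, eval_X, eval_natCast, pow_add, add_comm (1 / 2 : ℝ)]
  ring

theorem iteratedDeriv_pow_mul_zero {𝕜 : Type*} [NontriviallyNormedField 𝕜] {g : 𝕜 → 𝕜}
    {d : ℕ} (k : ℕ) (hg : ContDiffAt 𝕜 d g 0) :
    iteratedDeriv d (fun y => y ^ k * g y) 0
      = d.choose k * k ! * iteratedDeriv (d - k) g 0 := by
  rw [iteratedDeriv_fun_mul (by fun_prop) hg]
  simp only [iteratedDeriv_fun_pow_zero]
  rcases le_or_gt k d with hkd | hdk
  · simp [Finset.sum_ite_eq', hkd]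
  · simp [Nat.choose_eq_zero_of_lt hdk]

theorem iteratedDeriv_one_sub_mul_rpow_neg_zero (c s : ℝ) (n : ℕ) :
    iteratedDeriv n (fun y => (1 - c * y) ^ (-s)) 0 = c ^ n * (ascPochhammer ℝ n).eval s := by
  have h := ascPochhammer_eval_neg_eq_descPochhammer (R := ℝ) (-s) n
  rw [neg_neg] at h
  rw [iteratedDeriv_const_sub_mul_rpow, mul_zero, sub_zero, Real.one_rpow, mul_one, h, neg_pow]
  ring

theorem stmt_6 (k d : ℕ) :
    iteratedDeriv d
      (fun y : ℝ => ((2 * k).choose k : ℝ) * y ^ k / (1 - 4 * y) ^ ((k : ℝ) + 1 / 2)) 0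
    = ((2 * d).choose d : ℝ) * (d.choose k : ℝ) * (d.factorial : ℝ) := by
  have hf :
      (fun y : ℝ => ((2 * k).choose k : ℝ) * y ^ k / (1 - 4 * y) ^ ((k : ℝ) + 1 / 2))
        =ᶠ[𝓝 0] fun y => ((2 * k).choose k : ℝ) * (y ^ k * (1 - 4 * y) ^ (-((k : ℝ) + 1 / 2))) := by
    filter_upwards [eventually_lt_nhds (show (0 : ℝ) < 1 / 4 by norm_num)] with y hy
    rw [Real.rpow_neg (by linarith), div_eq_mul_inv, mul_assoc]
  have hg : ContDiffAt ℝ d (fun y : ℝ => (1 - 4 * y) ^ (-((k : ℝ) + 1 / 2))) 0 :=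
    ContDiffAt.rpow_const_of_ne (by fun_prop) (by norm_num)
  rw [hf.iteratedDeriv_eq, iteratedDeriv_const_mul_field, iteratedDeriv_pow_mul_zero k hg,
    iteratedDeriv_one_sub_mul_rpow_neg_zero]
  rcases le_or_gt k d with hkd | hdk
  · obtain ⟨m, rfl⟩ := Nat.exists_eq_add_of_le hkd
    rw [Nat.add_sub_cancel_left, ← Nat.centralBinom_eq_two_mul_choose,
      ← Nat.centralBinom_eq_two_mul_choose]
    linear_combination (-((k + m).choose k : ℝ)) * centralBinom_mul_factorial_add k m
  · simp [Nat.choose_eq_zero_of_lt hdk]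
end

section
/- Let n, d, k be positive integers with k ≥ d. Then the ratio C(n+k-d-1, k-d)/C(n+k-1, k) is at least 1 - d(n-1)/(k+1). -/
/-! With `n = m + 1`, the ratio is `multichoose n (k - d) / multichoose n k`. By Pascal's rule,
`multichoose n (j + 1) - multichoose n j = multichoose m (j + 1)`, which is monotone in `j ≥ 1`, so
each of the `d` increments between `k - d` and `k` is at most
`multichoose m k = m / (m + k) * multichoose n k ≤ m / (k + 1) * multichoose n k`.
Summing the `d` increments gives the bound. -/

namespace Nat

theorem mul_multichoose_succ (m k : ℕ) :
    m * multichoose (m + 1) k = (m + k) * multichoose m k := by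
  rcases Nat.eq_zero_or_pos (m + k) with h | h
  · obtain ⟨rfl, rfl⟩ : m = 0 ∧ k = 0 := by omega
    simp
  · obtain ⟨N, hN⟩ : ∃ N, m + k = N + 1 := ⟨m + k - 1, by omega⟩
    have h := choose_mul_succ_eq N k
    rw [multichoose_eq, multichoose_eq, show m + 1 + k - 1 = N + 1 by omega,
      show m + k - 1 = N by omega, hN]
    rw [show N + 1 - k = m by omega] at h
    linarith

theorem multichoose_le_multichoose_add_one (m : ℕ) {j : ℕ} (hj : j ≠ 0) :
    multichoose m j ≤ multichoose m (j + 1) := by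
  cases m with
  | zero => obtain ⟨i, rfl⟩ := exists_eq_succ_of_ne_zero hj; simp
  | succ m => rw [multichoose_succ_succ]; exact le_add_self

theorem multichoose_le_multichoose {m i j : ℕ} (hi : i ≠ 0) (hij : i ≤ j) :
    multichoose m i ≤ multichoose m j := by
  induction j, hij using Nat.le_induction with
  | base => rfl
  | succ j hij ih => exact ih.trans (multichoose_le_multichoose_add_one m (by omega))

theorem add_one_mul_multichoose_le {m k : ℕ} (hk : k ≠ 0) :
    (k + 1) * multichoose m k ≤ m * multichoose (m + 1) k := by
  rw [mul_multichoose_succ]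
  cases m with
  | zero => obtain ⟨i, rfl⟩ := exists_eq_succ_of_ne_zero hk; simp
  | succ m => exact Nat.mul_le_mul_right _ (by omega)

theorem add_one_mul_multichoose_succ_le {m j k : ℕ} (hjk : j < k) :
    (k + 1) * multichoose (m + 1) (j + 1)
      ≤ (k + 1) * multichoose (m + 1) j + m * multichoose (m + 1) k := by
  calc (k + 1) * multichoose (m + 1) (j + 1)
      = (k + 1) * multichoose (m + 1) j + (k + 1) * multichoose m (j + 1) := by
        rw [multichoose_succ_succ]; ring
    _ ≤ (k + 1) * multichoose (m + 1) j + (k + 1) * multichoose m k := by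
        gcongr; exact multichoose_le_multichoose (succ_ne_zero j) hjk
    _ ≤ (k + 1) * multichoose (m + 1) j + m * multichoose (m + 1) k :=
        Nat.add_le_add_left (add_one_mul_multichoose_le (by omega)) _

theorem add_one_mul_multichoose_le_multichoose_sub {m d k : ℕ} (hdk : d ≤ k) :
    (k + 1) * multichoose (m + 1) k
      ≤ (k + 1) * multichoose (m + 1) (k - d) + d * m * multichoose (m + 1) k := by
  induction d with
  | zero => simp
  | succ d ih =>
    have step := add_one_mul_multichoose_succ_le (m := m) (j := k - (d + 1)) (k := k) (by omega)
    rw [show k - (d + 1) + 1 = k - d by omega] at step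
    linarith [ih (by omega)]

end Nat

theorem stmt_12_general (n d k : ℕ) (hn : 0 < n) (hk : d ≤ k) :
    (1 : ℝ) - (d : ℝ) * ((n : ℝ) - 1) / ((k : ℝ) + 1)
      ≤ ((n + k - d - 1).choose (k - d) : ℝ) / ((n + k - 1).choose k : ℝ) := by
  obtain ⟨m, rfl⟩ : ∃ m, n = m + 1 := ⟨n - 1, by omega⟩
  rw [show m + 1 + k - d - 1 = m + 1 + (k - d) - 1 by omega, ← Nat.multichoose_eq,
    ← Nat.multichoose_eq]
  have hpos : (0 : ℝ) < Nat.multichoose (m + 1) k := by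
    rw [Nat.multichoose_eq]; exact_mod_cast Nat.choose_pos (by omega)
  have key : ((k + 1 : ℕ) : ℝ) * Nat.multichoose (m + 1) k
      ≤ ((k + 1 : ℕ) : ℝ) * Nat.multichoose (m + 1) (k - d) + d * m * Nat.multichoose (m + 1) k := by
    exact_mod_cast Nat.add_one_mul_multichoose_le_multichoose_sub (m := m) hk
  push_cast at key ⊢
  rw [add_sub_cancel_right, one_sub_div (by positivity), div_le_div_iff₀ (by positivity) hpos]
  linarith

theorem stmt_12 (n d k : ℕ) (hn : 0 < n) (hd : 0 < d) (hk : d ≤ k) :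
    (1 : ℝ) - (d : ℝ) * ((n : ℝ) - 1) / ((k : ℝ) + 1)
      ≤ ((n + k - d - 1).choose (k - d) : ℝ) / ((n + k - 1).choose k : ℝ) :=
  stmt_12_general n d k hn hk
end

section
/- Let U = span_ℝ{e₁⊗e₂ + e₂⊗e₁, e₁⊗e₁ - e₂⊗e₂} ⊆ S²(ℝ²) and let Π_U be the orthogonal projection onto U. Viewing Π_U as a complex operator on S²(ℂ²), the maximum over unit vectors v ∈ ℂ² of ⟨v⊗v, Π_U (v⊗v)⟩ equals 1, attained at v = (e₁ + i·e₂)/√2. -/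
/-!
For an orthogonal projection `P`, `re ⟪x, P x⟫ = ‖P x‖² ≤ ‖x‖²`, with equality when `x` lies in
the range of `P`. Since `‖v ⊗ v‖ = ‖v‖² = 1` for a unit vector `v`, the value is at most `1`, and
it is attained at `v₀ = (e₁ + i e₂)/√2` because
`v₀ ⊗ v₀ = (i/2)(e₁⊗e₂ + e₂⊗e₁) + (1/2)(e₁⊗e₁ - e₂⊗e₂) ∈ U`.
-/

namespace Submodule

variable {𝕜 E : Type*} [RCLike 𝕜] [NormedAddCommGroup E] [InnerProductSpace 𝕜 E]
  (K : Submodule 𝕜 E) [K.HasOrthogonalProjection]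

theorem re_inner_orthogonalProjectionOnto_right_eq_normSq (v : E) :
    RCLike.re (inner 𝕜 v (K.orthogonalProjectionOnto v : E)) =
      ‖K.orthogonalProjectionOnto v‖ ^ 2 := by
  rw [← starProjection_apply, ← inner_starProjection_left_eq_right,
    re_inner_starProjection_eq_normSq]

theorem re_inner_orthogonalProjectionOnto_right_le (v : E) :
    RCLike.re (inner 𝕜 v (K.orthogonalProjectionOnto v : E)) ≤ ‖v‖ ^ 2 := by
  rw [re_inner_orthogonalProjectionOnto_right_eq_normSq]
  exact pow_le_pow_left₀ (norm_nonneg _) (K.norm_orthogonalProjectionOnto_apply_le v) 2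

theorem re_inner_orthogonalProjectionOnto_right_of_mem {v : E} (hv : v ∈ K) :
    RCLike.re (inner 𝕜 v (K.orthogonalProjectionOnto v : E)) = ‖v‖ ^ 2 := by
  rw [re_inner_orthogonalProjectionOnto_right_eq_normSq, K.norm_orthogonalProjectionOnto_apply hv]

end Submodule

theorem EuclideanSpace.norm_toLp_mul {𝕜 ι κ : Type*} [RCLike 𝕜] [Fintype ι] [Fintype κ]
    (v : EuclideanSpace 𝕜 ι) (w : EuclideanSpace 𝕜 κ) :
    ‖WithLp.toLp 2 (fun p : ι × κ => v p.1 * w p.2)‖ = ‖v‖ * ‖w‖ := by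
  simp only [EuclideanSpace.norm_eq, norm_mul, mul_pow,
    Fintype.sum_prod_type, ← Finset.mul_sum, ← Finset.sum_mul]
  exact Real.sqrt_mul (Finset.sum_nonneg fun i _ => sq_nonneg _) _

/-- Let `U = span_ℝ{e₁⊗e₂ + e₂⊗e₁, e₁⊗e₁ - e₂⊗e₂} ⊆ S²(ℝ²)`, complexified, and
`Π_U` the orthogonal projection onto it.  The maximum of `⟨v⊗v, Π_U (v⊗v)⟩` over
complex unit vectors `v` is `1`, attained at `v = (e₁ + i e₂)/√2`. -/
theorem stmt_15
    (u₁ u₂ : EuclideanSpace ℂ (Fin 2 × Fin 2))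
    (hu₁ : u₁ = (WithLp.equiv 2 _).symm fun p : Fin 2 × Fin 2 =>
        if p = (0, 1) ∨ p = (1, 0) then (1 : ℂ) else 0)
    (hu₂ : u₂ = (WithLp.equiv 2 _).symm fun p : Fin 2 × Fin 2 =>
        if p = (0, 0) then (1 : ℂ) else if p = (1, 1) then -1 else 0)
    (U : Submodule ℂ (EuclideanSpace ℂ (Fin 2 × Fin 2)))
    (hU : U = Submodule.span ℂ {u₁, u₂})
    (tens : EuclideanSpace ℂ (Fin 2) → EuclideanSpace ℂ (Fin 2 × Fin 2))
    (htens : ∀ v, tens v = (WithLp.equiv 2 _).symm fun p : Fin 2 × Fin 2 =>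
        (WithLp.equiv 2 _) v p.1 * (WithLp.equiv 2 _) v p.2)
    (v₀ : EuclideanSpace ℂ (Fin 2))
    (hv₀ : v₀ = (WithLp.equiv 2 _).symm
        ![(1 / (Real.sqrt 2 : ℂ)), Complex.I / (Real.sqrt 2 : ℂ)]) :
    IsGreatest {r : ℝ | ∃ v : EuclideanSpace ℂ (Fin 2), ‖v‖ = 1 ∧
        r = (inner ℂ (tens v)
          ((U.orthogonalProjectionOnto (tens v) : U) : EuclideanSpace ℂ (Fin 2 × Fin 2)) : ℂ).re} 1 ∧
    ‖v₀‖ = 1 ∧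
    (inner ℂ (tens v₀)
      ((U.orthogonalProjectionOnto (tens v₀) : U) : EuclideanSpace ℂ (Fin 2 × Fin 2)) : ℂ).re = 1 := by
  have norm_tens (v : EuclideanSpace ℂ (Fin 2)) : ‖tens v‖ = ‖v‖ ^ 2 := by
    rw [htens, sq, ← EuclideanSpace.norm_toLp_mul]
    rfl
  have norm_v₀ : ‖v₀‖ = 1 := by
    norm_num [hv₀, EuclideanSpace.norm_eq, Fin.sum_univ_two]
  have tens_v₀ : tens v₀ = (Complex.I / 2) • u₁ + (1 / 2 : ℂ) • u₂ := by
    have hsqrt : (Real.sqrt 2 : ℂ) ^ 2 = 2 := by norm_cast; simp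
    ext p
    fin_cases p <;> simp [htens, hv₀, hu₁, hu₂] <;> field_simp <;> simp [hsqrt]
  have mem_U : tens v₀ ∈ U := by
    rw [tens_v₀, hU]
    exact Submodule.add_mem _ (Submodule.smul_mem _ _ (Submodule.subset_span (by simp)))
      (Submodule.smul_mem _ _ (Submodule.subset_span (by simp)))
  have value_v₀ : (inner ℂ (tens v₀)
      ((U.orthogonalProjectionOnto (tens v₀) : U) : EuclideanSpace ℂ (Fin 2 × Fin 2)) : ℂ).re = 1 := by
    rw [← RCLike.re_to_complex, U.re_inner_orthogonalProjectionOnto_right_of_mem mem_U,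
      norm_tens, norm_v₀]
    norm_num
  refine ⟨⟨⟨v₀, norm_v₀, value_v₀.symm⟩, ?_⟩, norm_v₀, value_v₀⟩
  rintro r ⟨v, hv, rfl⟩
  simpa [norm_tens, hv] using U.re_inner_orthogonalProjectionOnto_right_le (tens v)
end

section
/- Let P = [[0,0,1/2],[0,0,0],[1/2,0,0]] be the unique symmetric Gram matrix of p(x,y,z) = xz, and let v = (1/√6, i/√3, -1/√2) ∈ ℂ³. Then v is a unit vector, q(v) = 0 where q(x,y,z) = x² + y² - (1/√3)xz, and v† P v = -1/(2√3). In particular, the minimum of z ↦ z† P z over complex unit vectors in the zero set of q is at most -1/(2√3) < 0 = min of xz over real unit vectors in the zero set of q. -/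
/-!
The witness is isotropic for `q` only because it has an imaginary coordinate: the `y²` term
becomes `-1/3` and cancels `x² - xz/√3 = 1/6 + 1/6`. Over the reals `q = 0` forces `xz ≥ 0`,
whereas here `conj x · z = -1/√12` is negative.
-/

open Complex

lemma hermitianForm_xzGram (v : Fin 3 → ℂ) :
    ∑ i, ∑ j, star (v i) * (!![0, 0, 1/2; 0, 0, 0; 1/2, 0, 0] : Matrix (Fin 3) (Fin 3) ℂ) i j * v j
      = (star (v 0) * v 2 + star (v 2) * v 0) / 2 := by
  simp [Fin.sum_univ_three]
  ring

lemma Complex.ofReal_sqrt_mul_self {a : ℝ} (ha : 0 ≤ a) : (√a : ℂ) * √a = a := by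
  exact_mod_cast Real.mul_self_sqrt ha

lemma Complex.ofReal_sqrt_six : (√6 : ℂ) = √2 * √3 := by
  rw [← ofReal_mul, ← Real.sqrt_mul (by norm_num)]; norm_num

noncomputable def witness : Fin 3 → ℂ := ![1 / (√6 : ℂ), I / (√3 : ℂ), -(1 / (√2 : ℂ))]

lemma witness_normSq_sum : ∑ i, normSq (witness i) = 1 := by
  simp [witness, Fin.sum_univ_three, Real.mul_self_sqrt]
  norm_num

lemma witness_isotropic :
    witness 0 ^ 2 + witness 1 ^ 2 - 1 / (√3 : ℂ) * (witness 0 * witness 2) = 0 := by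
  have h2 := ofReal_sqrt_mul_self (a := 2) (by norm_num)
  have : (√2 : ℂ) ≠ 0 := by simp
  have : (√3 : ℂ) ≠ 0 := by simp
  simp only [witness, ofReal_sqrt_six, Matrix.cons_val, div_pow, I_sq]
  field_simp
  push_cast at h2
  linear_combination -h2

lemma witness_hermitianForm_xz :
    (star (witness 0) * witness 2 + star (witness 2) * witness 0) / 2 = -(1 / (2 * (√3 : ℂ))) := by
  have h2 := ofReal_sqrt_mul_self (a := 2) (by norm_num)
  have : (√2 : ℂ) ≠ 0 := by simp
  have : (√3 : ℂ) ≠ 0 := by simp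
  simp [witness, ofReal_sqrt_six]
  field_simp
  push_cast at h2
  linear_combination h2

theorem stmt_17 (P : Matrix (Fin 3) (Fin 3) ℂ)
    (hP : P = !![0, 0, 1/2; 0, 0, 0; 1/2, 0, 0])
    (v : Fin 3 → ℂ)
    (hv : v = ![1 / (Real.sqrt 6 : ℂ), Complex.I / (Real.sqrt 3 : ℂ), -(1 / (Real.sqrt 2 : ℂ))]) :
    (∑ i, Complex.normSq (v i)) = 1 ∧
    (v 0) ^ 2 + (v 1) ^ 2 - (1 / (Real.sqrt 3 : ℂ)) * (v 0 * v 2) = 0 ∧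
    (∑ i, ∑ j, star (v i) * P i j * v j) = -(1 / (2 * (Real.sqrt 3 : ℂ))) ∧
    (∃ z : Fin 3 → ℂ, (∑ i, Complex.normSq (z i)) = 1 ∧
      (z 0) ^ 2 + (z 1) ^ 2 - (1 / (Real.sqrt 3 : ℂ)) * (z 0 * z 2) = 0 ∧
      (∑ i, ∑ j, star (z i) * P i j * z j).re ≤ -(1 / (2 * Real.sqrt 3))) ∧
    -(1 / (2 * Real.sqrt 3)) < (0 : ℝ) := by
  obtain rfl : v = witness := hv
  have hform : ∑ i, ∑ j, star (witness i) * P i j * witness j = -(1 / (2 * (√3 : ℂ))) := by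
    rw [hP, hermitianForm_xzGram, witness_hermitianForm_xz]
  refine ⟨witness_normSq_sum, witness_isotropic, hform,
    ⟨witness, witness_normSq_sum, witness_isotropic, le_of_eq ?_⟩, by simp⟩
  rw [hform]
  norm_cast
end

section
/- Let n ≥ 1, d ≥ 1 and let Π_d be the orthogonal projection of (ℝⁿ)^{⊗d} onto the symmetric subspace. Define N = M(‖x‖^{2d}) to be the unique symmetric operator on S^d(ℝⁿ) satisfying ⟨x^{⊗d}, N x^{⊗d}⟩ = ‖x‖^{2d} for all x and invariant under partial transpose in the first factor. Then N is positive definite. -/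
/-!
Let `γ` be the standard Gaussian measure on `ℝⁿ` and `c₀ = ∫ y^{2d} dγ₁`. The mixed moments
`M c = ∫ ∏ₛ g (c s) dγ` of `2d`-tuples `c` form a kernel invariant under all permutations of the
`2d` slots, and by rotation invariance of `γ` its polynomial is `∫ ⟪x, g⟫^{2d} dγ = c₀ ‖x‖^{2d}`.
Invariance of `N` under permutations of each factor and under the partial transpose makes
`(a, b) ↦ N a b` invariant under all permutations of the `2d` slots as well, and a fully
symmetric kernel is determined by its polynomial, so `c₀ N = M`. Hence
`c₀ ⟨ψ, N ψ⟩ = ∫ p_ψ² dγ` with `p_ψ g = ∑ₐ ψ a ∏ₜ g (a t)`, which is positive: `p_ψ ≠ 0` since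
`ψ` is symmetric and nonzero, and `γ` charges every nonempty open set. As `c₀ ≥ 0`, this forces
`⟨ψ, N ψ⟩ > 0` without computing `c₀`.
-/

open MeasureTheory ProbabilityTheory Finset
open scoped RealInnerProductSpace

namespace ProbabilityTheory

section StdGaussian

variable {E : Type*} [NormedAddCommGroup E] [InnerProductSpace ℝ E] [FiniteDimensional ℝ E]
  [MeasurableSpace E] [BorelSpace E]

lemma map_innerSL_stdGaussian (x : E) :
    (stdGaussian E).map (innerSL ℝ x) = (gaussianReal 0 1).map (‖x‖ * ·) := by
  rw [IsGaussian.map_eq_gaussianReal, integral_strongDual_stdGaussian, variance_dual_stdGaussian,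
    innerSL_apply_norm, gaussianReal_map_const_mul, mul_zero, mul_one]
  congr
  ext
  simp

lemma integral_inner_pow_stdGaussian (x : E) (m : ℕ) :
    ∫ g, ⟪x, g⟫ ^ m ∂stdGaussian E = ‖x‖ ^ m * ∫ y, y ^ m ∂gaussianReal 0 1 := by
  calc ∫ g, ⟪x, g⟫ ^ m ∂stdGaussian E
      = ∫ y, y ^ m ∂(stdGaussian E).map (innerSL ℝ x) :=
        (integral_map (by fun_prop) (continuous_pow m).aestronglyMeasurable).symm
    _ = ∫ y, (‖x‖ * y) ^ m ∂gaussianReal 0 1 := by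
        rw [map_innerSL_stdGaussian, integral_map (by fun_prop) (by fun_prop)]
    _ = ‖x‖ ^ m * ∫ y, y ^ m ∂gaussianReal 0 1 := by
        simp_rw [mul_pow, integral_const_mul]

instance isOpenPosMeasure_stdGaussian : (stdGaussian E).IsOpenPosMeasure := by
  have : (gaussianReal 0 1).IsOpenPosMeasure :=
    (gaussianReal_absolutelyContinuous' 0 one_ne_zero).isOpenPosMeasure
  let b := stdOrthonormalBasis ℝ E
  exact Continuous.isOpenPosMeasure_map (by fun_prop)
    fun v => ⟨fun i => b.repr v i, b.sum_repr v⟩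

end StdGaussian

lemma IsGaussian.integrable_prod_strongDual {F : Type*} [NormedAddCommGroup F] [NormedSpace ℝ F]
    [MeasurableSpace F] [BorelSpace F] [CompleteSpace F] [SecondCountableTopology F]
    (μ : Measure F) [IsGaussian μ] {κ : Type*} [Fintype κ] (L : κ → StrongDual ℝ F) :
    Integrable (fun g => ∏ t, L t g) μ := by
  have hnorm := (IsGaussian.memLp_id μ (Fintype.card κ) (by simp)).integrable_norm_pow'
  refine Integrable.mono' (hnorm.const_mul (∏ t, ‖L t‖)) (by fun_prop) (.of_forall fun g => ?_)
  calc ‖∏ t, L t g‖ ≤ ∏ t, ‖L t‖ * ‖g‖ := by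
        rw [norm_prod]
        exact prod_le_prod (fun _ _ => norm_nonneg _) (fun t _ => (L t).le_opNorm g)
    _ = (∏ t, ‖L t‖) * ‖id g‖ ^ Fintype.card κ := by
        rw [prod_mul_distrib, prod_const, card_univ, id]

end ProbabilityTheory

section Tuples

variable {κ ι : Type*} [Fintype κ]

noncomputable def tupleDegree (c : κ → ι) : ι →₀ ℕ := ∑ t, Finsupp.single (c t) 1

lemma prod_X_eq_monomial_tupleDegree {R : Type*} [CommSemiring R] (c : κ → ι) :
    ∏ t, (MvPolynomial.X (c t) : MvPolynomial ι R) = MvPolynomial.monomial (tupleDegree c) 1 := by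
  rw [tupleDegree, MvPolynomial.monomial_sum_one]
  rfl

lemma tupleDegree_apply (c : κ → ι) (i : ι) : tupleDegree c i = Nat.card {t // c t = i} := by
  classical
  simp [tupleDegree, Finsupp.finsetSum_apply, Finsupp.single_apply, Fintype.card_subtype]

lemma exists_perm_comp_eq_of_tupleDegree_eq {c c' : κ → ι}
    (h : tupleDegree c = tupleDegree c') : ∃ σ : Equiv.Perm κ, c ∘ σ = c' := by
  have hcard i : Nat.card {t // c' t = i} = Nat.card {t // c t = i} := by
    rw [← tupleDegree_apply, ← tupleDegree_apply, h]
  let e i : {t // c' t = i} ≃ {t // c t = i} := (Finite.card_eq.1 (hcard i)).some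
  refine ⟨(Equiv.sigmaFiberEquiv c').symm.trans
    ((Equiv.sigmaCongrRight e).trans (Equiv.sigmaFiberEquiv c)), funext fun t => ?_⟩
  exact (e (c' t) ⟨t, rfl⟩).2

lemma eq_zero_of_forall_sum_mul_prod_eq_zero {R : Type*} [CommRing R] [IsDomain R] [CharZero R]
    [DecidableEq κ] [Fintype ι] {K : (κ → ι) → R} (hK : ∀ (σ : Equiv.Perm κ) c, K (c ∘ σ) = K c)
    (h : ∀ x : ι → R, ∑ c, K c * ∏ t, x (c t) = 0) : K = 0 := by
  classical
  set P : MvPolynomial ι R := ∑ c, MvPolynomial.monomial (tupleDegree c) (K c)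
  have hP : P = 0 := MvPolynomial.funext fun x => by
    have hmono c : MvPolynomial.monomial (tupleDegree c) (K c)
        = MvPolynomial.C (K c) * ∏ t, MvPolynomial.X (c t) := by
      rw [prod_X_eq_monomial_tupleDegree, MvPolynomial.C_mul_monomial, mul_one]
    simp only [P, hmono, map_sum, map_mul, MvPolynomial.eval_C, MvPolynomial.eval_prod,
      MvPolynomial.eval_X, map_zero]
    exact h x
  funext c₀
  -- the coefficient of `X ^ tupleDegree c₀` in `P` sums `K` over the rearrangements of `c₀`
  have hcoeff := congrArg (MvPolynomial.coeff (tupleDegree c₀)) hP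
  simp only [P, MvPolynomial.coeff_sum, MvPolynomial.coeff_monomial, MvPolynomial.coeff_zero,
    ← sum_filter] at hcoeff
  have hconst : ∀ c ∈ univ.filter (fun c => tupleDegree c = tupleDegree c₀), K c = K c₀ := by
    intro c hc
    obtain ⟨σ, rfl⟩ := exists_perm_comp_eq_of_tupleDegree_eq (mem_filter.1 hc).2.symm
    exact hK σ c₀
  rw [sum_congr rfl hconst, sum_const, nsmul_eq_mul] at hcoeff
  have hmem : c₀ ∈ univ.filter (fun c => tupleDegree c = tupleDegree c₀) := by simp
  exact (mul_eq_zero.1 hcoeff).resolve_left (by exact_mod_cast (card_pos.2 ⟨c₀, hmem⟩).ne')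

end Tuples

section SlotSymmetry

variable {κ ι β : Type*}

def slotSymmetries (K : (κ → ι) → β) : Subgroup (Equiv.Perm κ) where
  carrier := {σ | ∀ c, K (c ∘ σ) = K c}
  mul_mem' {σ τ} hσ hτ c := by rw [Equiv.Perm.coe_mul, ← Function.comp_assoc, hτ, hσ]
  one_mem' _ := rfl
  inv_mem' {σ} hσ c := by
    rw [← hσ (c ∘ ⇑σ⁻¹), Function.comp_assoc, ← Equiv.Perm.coe_mul, inv_mul_cancel,
      Equiv.Perm.coe_one, Function.comp_id]

lemma mem_slotSymmetries {K : (κ → ι) → β} {σ : Equiv.Perm κ} :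
    σ ∈ slotSymmetries K ↔ ∀ c, K (c ∘ σ) = K c :=
  Iff.rfl

end SlotSymmetry

open Equiv Equiv.Perm in
lemma Equiv.Perm.subgroup_eq_top_of_sumCongr_mem {α γ : Type*} [DecidableEq α] [DecidableEq γ]
    [Finite α] [Finite γ] (H : Subgroup (Perm (α ⊕ γ)))
    (hsum : ∀ σ τ, sumCongr σ τ ∈ H) {a₀ : α} {b₀ : γ} (hswap : swap (.inl a₀) (.inr b₀) ∈ H) :
    H = ⊤ := by
  have hcross a b : swap (Sum.inl a) (Sum.inr b) ∈ H := by
    have := swap_apply_apply (sumCongr (swap a₀ a) (swap b₀ b)) (.inl a₀) (.inr b₀)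
    simp only [sumCongr_apply, Sum.map_inl, Sum.map_inr, swap_apply_left] at this
    rw [this]
    exact H.mul_mem (H.mul_mem (hsum _ _) hswap) (H.inv_mem (hsum _ _))
  rw [eq_top_iff, ← closure_isSwap, Subgroup.closure_le]
  rintro _ ⟨x, y, -, rfl⟩
  rcases x with a | b <;> rcases y with a' | b'
  · exact sumCongr_swap_one (β := γ) a a' ▸ hsum _ _
  · exact hcross a b'
  · exact swap_comm (Sum.inr b) (Sum.inl a') ▸ hcross a' b
  · exact sumCongr_one_swap (α := α) b b' ▸ hsum _ _

section PairKernel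

variable {α ι β : Type*} {N : (α → ι) → (α → ι) → β}

lemma sumCongr_mem_slotSymmetries
    (hN : ∀ (σ : Equiv.Perm α) a b, N (a ∘ σ) b = N a b ∧ N a (b ∘ σ) = N a b)
    (σ τ : Equiv.Perm α) :
    σ.sumCongr τ ∈ slotSymmetries fun c : α ⊕ α → ι => N (c ∘ Sum.inl) (c ∘ Sum.inr) :=
  fun c => by
    change N ((c ∘ Sum.inl) ∘ σ) ((c ∘ Sum.inr) ∘ τ) = _
    rw [(hN σ _ _).1, (hN τ _ _).2]

lemma swap_inl_inr_mem_slotSymmetries [DecidableEq α] (z : α)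
    (hN : ∀ a b, N (Function.update a z (b z)) (Function.update b z (a z)) = N a b) :
    Equiv.swap (Sum.inl z) (Sum.inr z) ∈
      slotSymmetries fun c : α ⊕ α → ι => N (c ∘ Sum.inl) (c ∘ Sum.inr) := fun c => by
  have hl : (c ∘ Equiv.swap (Sum.inl z) (Sum.inr z)) ∘ Sum.inl
      = Function.update (c ∘ Sum.inl) z (c (Sum.inr z)) := by
    ext t
    rcases eq_or_ne t z with rfl | ht
    · simp
    · simp [ht, Equiv.swap_apply_of_ne_of_ne]
  have hr : (c ∘ Equiv.swap (Sum.inl z) (Sum.inr z)) ∘ Sum.inr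
      = Function.update (c ∘ Sum.inr) z (c (Sum.inl z)) := by
    ext t
    rcases eq_or_ne t z with rfl | ht
    · simp
    · simp [ht, Equiv.swap_apply_of_ne_of_ne]
  simp only [hl, hr]
  exact hN (c ∘ Sum.inl) (c ∘ Sum.inr)

end PairKernel

lemma sum_sumElim_mul_prod {α β ι R : Type*} [Fintype α] [Fintype β] [Fintype ι] [DecidableEq α]
    [DecidableEq β] [CommSemiring R] (F : (α → ι) → (β → ι) → R) (x : ι → R) :
    ∑ c : α ⊕ β → ι, F (c ∘ Sum.inl) (c ∘ Sum.inr) * ∏ s, x (c s)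
      = ∑ a, ∑ b, (∏ t, x (a t)) * F a b * ∏ t, x (b t) := by
  rw [← (Equiv.sumArrowEquivProdArrow α β ι).symm.sum_comp, Fintype.sum_prod_type]
  refine sum_congr rfl fun a _ => sum_congr rfl fun b _ => ?_
  rw [Fintype.prod_sum_type]
  change F a b * ((∏ t, x (a t)) * ∏ t, x (b t)) = _
  ring

lemma sq_sum_mul_prod {α ι R : Type*} [Fintype α] [Fintype ι] [DecidableEq α] [CommSemiring R]
    (ψ : (α → ι) → R) (g : ι → R) :
    (∑ a, ψ a * ∏ t, g (a t)) ^ 2 = ∑ a, ∑ b, ψ a * ψ b * ∏ s, g (Sum.elim a b s) := by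
  simp only [sq, sum_mul_sum, Fintype.prod_sum_type, Sum.elim_inl, Sum.elim_inr]
  refine sum_congr rfl fun a _ => sum_congr rfl fun b _ => ?_
  ring

section Moments

variable {ι κ α : Type*} [Fintype ι] [Fintype κ]

noncomputable def stdGaussianMoment (c : κ → ι) : ℝ :=
  ∫ g : EuclideanSpace ℝ ι, ∏ t, g (c t) ∂stdGaussian (EuclideanSpace ℝ ι)

lemma integrable_prod_apply_stdGaussian (c : κ → ι) :
    Integrable (fun g : EuclideanSpace ℝ ι => ∏ t, g (c t)) (stdGaussian _) :=
  IsGaussian.integrable_prod_strongDual _ fun t => EuclideanSpace.proj (c t)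

lemma stdGaussianMoment_comp_perm (σ : Equiv.Perm κ) (c : κ → ι) :
    stdGaussianMoment (c ∘ σ) = stdGaussianMoment c :=
  integral_congr_ae (.of_forall fun g => Equiv.prod_comp σ fun t => g (c t))

lemma sum_stdGaussianMoment_mul_prod [DecidableEq κ] (x : ι → ℝ) :
    ∑ c : κ → ι, stdGaussianMoment c * ∏ t, x (c t)
      = ‖WithLp.toLp 2 x‖ ^ Fintype.card κ * ∫ y, y ^ Fintype.card κ ∂gaussianReal 0 1 := by
  calc ∑ c : κ → ι, stdGaussianMoment c * ∏ t, x (c t)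
      = ∫ g : EuclideanSpace ℝ ι, ∑ c : κ → ι, (∏ t, g (c t)) * ∏ t, x (c t)
          ∂stdGaussian _ := by
        simp_rw [stdGaussianMoment, ← integral_mul_const]
        exact (integral_finsetSum _ fun c _ =>
          (integrable_prod_apply_stdGaussian c).mul_const _).symm
    _ = ∫ g, ⟪WithLp.toLp 2 x, g⟫ ^ Fintype.card κ ∂stdGaussian _ := by
        refine integral_congr_ae (.of_forall fun g => ?_)
        simp only [PiLp.inner_apply, RCLike.inner_apply, conj_trivial, ← card_univ,
          ← prod_const, Fintype.prod_sum, ← prod_mul_distrib]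
    _ = _ := integral_inner_pow_stdGaussian _ _

lemma integrable_sq_sum_mul_prod_stdGaussian [Fintype α] [DecidableEq α] (ψ : (α → ι) → ℝ) :
    Integrable (fun g : EuclideanSpace ℝ ι => (∑ a, ψ a * ∏ t, g (a t)) ^ 2) (stdGaussian _) := by
  simp_rw [sq_sum_mul_prod]
  exact integrable_finsetSum _ fun a _ => integrable_finsetSum _ fun b _ =>
    (integrable_prod_apply_stdGaussian _).const_mul _

lemma integral_sq_sum_mul_prod_stdGaussian [Fintype α] [DecidableEq α] (ψ : (α → ι) → ℝ) :
    ∫ g : EuclideanSpace ℝ ι, (∑ a, ψ a * ∏ t, g (a t)) ^ 2 ∂stdGaussian _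
      = ∑ a, ∑ b, ψ a * ψ b * stdGaussianMoment (Sum.elim a b) := by
  simp_rw [sq_sum_mul_prod, stdGaussianMoment, ← integral_const_mul]
  rw [integral_finsetSum _ fun a _ => integrable_finsetSum _ fun b _ =>
    (integrable_prod_apply_stdGaussian _).const_mul _]
  exact sum_congr rfl fun a _ => integral_finsetSum _ fun b _ =>
    (integrable_prod_apply_stdGaussian _).const_mul _

end Moments

/-- The maximally symmetric Gram operator `N = M(‖x‖^{2d})` of the form `‖x‖^{2d}`
(a symmetric operator on `S^d(ℝⁿ)`, i.e. a symmetric matrix on the `d`-fold tensor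
power which is invariant under permutations of the tensor factors, is a Gram operator
for `‖x‖^{2d}`, and is invariant under partial transpose in the first factor) is
positive definite on the symmetric subspace. -/
theorem stmt_19 (n d : ℕ) (hd : 1 ≤ d)
    (N : Matrix (Fin d → Fin n) (Fin d → Fin n) ℝ)
    (hperm : ∀ (σ : Equiv.Perm (Fin d)) (a b : Fin d → Fin n),
      N (a ∘ σ) b = N a b ∧ N a (b ∘ σ) = N a b)
    (hGram : ∀ x : Fin n → ℝ,
      ∑ a, ∑ b, (∏ t, x (a t)) * N a b * (∏ t, x (b t)) = (∑ i, (x i) ^ 2) ^ d)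
    (hpt : ∀ a b : Fin d → Fin n,
      N (Function.update a ⟨0, by omega⟩ (b ⟨0, by omega⟩))
        (Function.update b ⟨0, by omega⟩ (a ⟨0, by omega⟩)) = N a b) :
    ∀ ψ : (Fin d → Fin n) → ℝ,
      (∀ (σ : Equiv.Perm (Fin d)) (a : Fin d → Fin n), ψ (a ∘ σ) = ψ a) →
      ψ ≠ 0 → 0 < ∑ a, ∑ b, ψ a * N a b * ψ b := by
  intro ψ hψ hψ0
  set c₀ := ∫ y, y ^ (2 * d) ∂gaussianReal 0 1
  set K : (Fin d ⊕ Fin d → Fin n) → ℝ := fun c => N (c ∘ Sum.inl) (c ∘ Sum.inr)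
  have hK : slotSymmetries K = ⊤ := Equiv.Perm.subgroup_eq_top_of_sumCongr_mem _
    (sumCongr_mem_slotSymmetries hperm) (swap_inl_inr_mem_slotSymmetries _ hpt)
  have hNM : (fun c => c₀ * K c - stdGaussianMoment c) = 0 := by
    refine eq_zero_of_forall_sum_mul_prod_eq_zero (fun σ c => ?_) fun x => ?_
    · rw [mem_slotSymmetries.1 (hK ▸ Subgroup.mem_top σ : σ ∈ slotSymmetries K),
        stdGaussianMoment_comp_perm]
    · simp only [sub_mul, sum_sub_distrib, mul_assoc, ← mul_sum, sum_stdGaussianMoment_mul_prod]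
      rw [sum_sumElim_mul_prod N x, hGram, Fintype.card_sum, Fintype.card_fin, ← two_mul,
        pow_mul, EuclideanSpace.real_norm_sq_eq]
      ring
  have hquad : c₀ * ∑ a, ∑ b, ψ a * N a b * ψ b
      = ∫ g, (∑ a, ψ a * ∏ t, g (a t)) ^ 2 ∂stdGaussian (EuclideanSpace ℝ (Fin n)) := by
    have hM c : stdGaussianMoment c = c₀ * K c := (sub_eq_zero.1 (congrFun hNM c)).symm
    simp_rw [integral_sq_sum_mul_prod_stdGaussian, hM, mul_sum]
    refine sum_congr rfl fun a _ => sum_congr rfl fun b _ => ?_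
    simp only [K, Sum.elim_comp_inl, Sum.elim_comp_inr]
    ring
  obtain ⟨x, hx⟩ : ∃ x : Fin n → ℝ, ∑ a, ψ a * ∏ t, x (a t) ≠ 0 := by
    by_contra! h
    exact hψ0 (eq_zero_of_forall_sum_mul_prod_eq_zero hψ h)
  have hpos : 0 < ∫ g, (∑ a, ψ a * ∏ t, g (a t)) ^ 2 ∂stdGaussian (EuclideanSpace ℝ (Fin n)) :=
    integral_pos_of_integrable_nonneg_nonzero (x := WithLp.toLp 2 x) (by fun_prop)
      (integrable_sq_sum_mul_prod_stdGaussian ψ) (fun g => sq_nonneg _) (pow_ne_zero 2 hx)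
  exact pos_of_mul_pos_right (hquad ▸ hpos) (integral_nonneg fun y => (even_two_mul d).pow_nonneg y)
end
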